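/- (Theorem 2 of the paper.) Suppose that every choice of Q columns from among the first M(Q+1) columns of A is linearly independent (equivalently, every Q×Q submatrix formed by choosing Q of these columns is invertible). Then for Lebesgue-almost every X₀ ∈ ℂ^{M×MQ}, letting X have first MQ columns equal to X₀ and satisfy the training condition x_m(MQ+n) = δ_{n−m} (1 ≤ n, m ≤ M), the matrix C_R(X) is invertible and det(J(X)) ≠ 0. -/

import Mathlib

open Matrix

noncomputable section

/-- The column index `(m-1)Q + q` (0-indexed: `m*Q + q`) among the first `MQ`
columns, as an index into `Fin T`. -/
def emb (M Q T : ℕ) (h : M * Q ≤ T) (p : Fin M × Fin Q) : Fin T :=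
  ⟨p.1.1 * Q + p.2.1, by
    have hm := p.1.2
    have hq := p.2.2
    have h1 : p.1.1 * Q + p.2.1 < (p.1.1 + 1) * Q := by
      have : (p.1.1 + 1) * Q = p.1.1 * Q + Q := by ring
      omega
    have h2 : (p.1.1 + 1) * Q ≤ M * Q := Nat.mul_le_mul_right Q hm
    omega⟩

/-- The column index `MQ + j` (0-indexed) as an index into `Fin T`, assuming
`M(Q+1) ≤ T`. -/
def tcol (M Q T : ℕ) (h : M * (Q + 1) ≤ T) (j : Fin M) : Fin T :=
  ⟨M * Q + j.1, by
    have hj := j.2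
    have : M * (Q + 1) = M * Q + M := by ring
    omega⟩

/-- `R(X) ∈ ℂ^{MQ×T}`: the block matrix whose `m`-th block of `Q` rows is
`A·diag(x_m)`; rows are indexed by pairs `(m, q)`. -/
def Rmat (M Q T : ℕ) (A : Matrix (Fin Q) (Fin T) ℂ) (X : Matrix (Fin M) (Fin T) ℂ) :
    Matrix (Fin M × Fin Q) (Fin T) ℂ :=
  Matrix.of fun p t => A p.2 t * X p.1 t

/-- `C_R(X) ∈ ℂ^{MQ×MQ}`: the submatrix of the first `MQ` columns of `R(X)`. -/
def CR (M Q T : ℕ) (h : M * Q ≤ T) (A : Matrix (Fin Q) (Fin T) ℂ)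
    (X : Matrix (Fin M) (Fin T) ℂ) : Matrix (Fin M × Fin Q) (Fin M × Fin Q) ℂ :=
  Matrix.of fun p p' => Rmat M Q T A X p (emb M Q T h p')

/-- `B = C_R⁻¹·R ∈ ℂ^{MQ×T}`, the reduced row echelon form representative. -/
def Bmat (M Q T : ℕ) (h : M * Q ≤ T) (A : Matrix (Fin Q) (Fin T) ℂ)
    (X : Matrix (Fin M) (Fin T) ℂ) : Matrix (Fin M × Fin Q) (Fin T) ℂ :=
  (CR M Q T h A X)⁻¹ * Rmat M Q T A X

/-- `J(X) ∈ ℂ^{MQ×MQ}`: the block matrix whose `j`-th block of `Q` rows is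
`A[:,1:MQ]·diag(B(MQ+j))`. -/
def Jmat (M Q T : ℕ) (h : M * (Q + 1) ≤ T) (A : Matrix (Fin Q) (Fin T) ℂ)
    (X : Matrix (Fin M) (Fin T) ℂ) : Matrix (Fin M × Fin Q) (Fin M × Fin Q) ℂ :=
  Matrix.of fun p p' =>
    A p.2 (emb M Q T (le_trans (Nat.mul_le_mul_left M (Nat.le_succ Q)) h) p')
      * Bmat M Q T (le_trans (Nat.mul_le_mul_left M (Nat.le_succ Q)) h) A X p'
          (tcol M Q T h p.1)

/-!
Since `B(MQ + j) = C_R⁻¹ R(MQ + j)`, replacing `C_R⁻¹` by the adjugate turns `det C_R · det J`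
into a polynomial in the entries of `X₀` whose nonvanishing is exactly the conclusion, and the zero
set of a nonzero complex polynomial is Lebesgue-null (Fubini and induction on the number of
variables). So one `X₀` at which the polynomial does not vanish suffices. Take `x_m` to be the
indicator of the `m`-th block of `Q` columns: then `C_R` is block diagonal with blocks `A_m`, the
`m`-th block of columns of `A`, and `J` is block diagonal with blocks `A_m · diag(A_m⁻¹ a_m)`, where
`a_m` is the `m`-th training column of `A`. By Cramer's rule each entry of `A_m⁻¹ a_m` is a ratio
of two `Q × Q` minors of the first `M(Q+1)` columns of `A`, nonzero by hypothesis.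
-/

open MeasureTheory

namespace MvPolynomial

theorem measurableSet_setOf_eval_eq_zero {σ : Type*} [Fintype σ] (P : MvPolynomial σ ℂ) :
    MeasurableSet {x : σ → ℂ | eval x P = 0} :=
  (continuous_eval P).measurable (measurableSet_singleton 0)

theorem volume_setOf_eval_eq_zero_fin :
    ∀ {n : ℕ} {P : MvPolynomial (Fin n) ℂ}, P ≠ 0 → volume {x | eval x P = 0} = 0
  | 0, P, hP => by
    obtain ⟨c, rfl⟩ := C_surjective (Fin 0) P
    have hc : c ≠ 0 := by rintro rfl; exact hP (map_zero _)
    simp [hc]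
  | n + 1, P, hP => by
    set p := finSuccEquiv ℂ n P
    have hp : p ≠ 0 := (map_ne_zero_iff _ (finSuccEquiv ℂ n).injective).mpr hP
    -- Off the null zero set of the leading coefficient, each slice is a nonzero polynomial.
    have hslice : ∀ᵐ y : Fin n → ℂ, volume {x : ℂ | eval (Fin.cons x y) P = 0} = 0 := by
      have hlead := volume_setOf_eval_eq_zero_fin (Polynomial.leadingCoeff_ne_zero.mpr hp)
      refine ae_iff.mpr (measure_mono_null (fun y hy ↦ ?_) hlead)
      simp only [Set.mem_ofPred_eq, eval_eq_eval_mv_eval'] at hy ⊢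
      contrapose! hy
      have hmap : p.map (eval y) ≠ 0 := fun h0 ↦ hy (by
        simpa [Polynomial.coeff_map] using congrArg (Polynomial.coeff · p.natDegree) h0)
      exact (Polynomial.finite_setOfPred_isRoot hmap).measure_zero (volume : Measure ℂ)
    have hcons : MeasurePreserving (fun w : ℂ × (Fin n → ℂ) ↦ (Fin.cons w.1 w.2 : Fin (n + 1) → ℂ))
        volume volume := by
      have h := (volume_preserving_piFinSuccAbove (fun _ : Fin (n + 1) ↦ ℂ) 0).symm
      have he : ⇑(MeasurableEquiv.piFinSuccAbove (fun _ : Fin (n + 1) ↦ ℂ) 0).symm =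
          fun w ↦ Fin.cons w.1 w.2 := by
        funext w
        change Fin.insertNthEquiv (fun _ : Fin (n + 1) ↦ ℂ) 0 w = _
        simp [Fin.insertNthEquiv, Fin.insertNth_zero']
      rwa [he] at h
    rw [← hcons.measure_preimage (measurableSet_setOf_eval_eq_zero P).nullMeasurableSet,
      Measure.volume_eq_prod, Measure.prod_apply_symm
        (hcons.measurable (measurableSet_setOf_eval_eq_zero P))]
    exact lintegral_eq_zero_of_ae_eq_zero hslice

theorem volume_setOf_eval_eq_zero {σ : Type*} [Fintype σ] {P : MvPolynomial σ ℂ} (hP : P ≠ 0) :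
    volume {x : σ → ℂ | eval x P = 0} = 0 := by
  let e := Fintype.equivFin σ
  have hmp := volume_preserving_arrowCongr' e.symm (.refl ℂ) (.id volume)
  rw [← hmp.measure_preimage (measurableSet_setOf_eval_eq_zero P).nullMeasurableSet]
  convert volume_setOf_eval_eq_zero_fin ((rename_injective e e.injective).ne hP) using 2
  ext u
  simp only [Set.mem_preimage, Set.mem_ofPred_eq, eval_rename]
  rfl

end MvPolynomial

theorem MeasureTheory.volume_measurePreserving_uncurry (ι κ α : Type*) [Fintype ι] [Fintype κ]
    [MeasureSpace α] [SigmaFinite (volume : Measure α)] :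
    MeasurePreserving (Function.uncurry : (ι → κ → α) → ι × κ → α) volume volume := by
  refine ⟨measurable_uncurry, (Measure.pi_eq fun s hs ↦ ?_).symm.trans volume_pi.symm⟩
  have hpre : Function.uncurry ⁻¹' Set.univ.pi s =
      Set.univ.pi fun i ↦ Set.univ.pi fun k ↦ s (i, k) := by
    ext x
    simp [Set.mem_pi, Prod.forall]
  rw [Measure.map_apply measurable_uncurry (.univ_pi hs), hpre, volume_pi_pi]
  simp_rw [volume_pi_pi]
  exact (Fintype.prod_prod_type fun v ↦ volume (s v)).symm

theorem MvPolynomial.ae_eval_uncurry_ne_zero {ι κ : Type*} [Fintype ι] [Fintype κ]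
    {P : MvPolynomial (ι × κ) ℂ} (hP : P ≠ 0) :
    ∀ᵐ x : ι → κ → ℂ, eval (Function.uncurry x) P ≠ 0 := by
  simp only [ae_iff, ne_eq, not_not]
  exact ((volume_measurePreserving_uncurry ι κ ℂ).measure_preimage
    (measurableSet_setOf_eval_eq_zero P).nullMeasurableSet).trans (volume_setOf_eval_eq_zero hP)

namespace Identifiability

variable {ι κ R S : Type*} [CommRing R] [CommRing S]

/- With `A₁ = A[:,1:MQ]`, `A₂` the training columns of `A` and `X₀` the first `MQ` columns of `X`,
`dataMatrix A₁ X₀` is `C_R(X)`, `trainingMatrix A₂` is formed by the training columns of `R(X)`, and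
`jacobianMatrix A₁ K` is `J(X)` when `K` is formed by the training columns of `B`. -/
def dataMatrix (A₁ : Matrix κ (ι × κ) R) (X₀ : ι → ι × κ → R) : Matrix (ι × κ) (ι × κ) R :=
  of fun p p' ↦ A₁ p.2 p' * X₀ p.1 p'

def jacobianMatrix (A₁ : Matrix κ (ι × κ) R) (K : Matrix (ι × κ) ι R) :
    Matrix (ι × κ) (ι × κ) R :=
  of fun p p' ↦ A₁ p.2 p' * K p' p.1

theorem jacobianMatrix_smul (A₁ : Matrix κ (ι × κ) R) (c : R) (K : Matrix (ι × κ) ι R) :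
    jacobianMatrix A₁ (c • K) = c • jacobianMatrix A₁ K := by
  ext p p'
  simp only [jacobianMatrix, of_apply, Matrix.smul_apply, smul_eq_mul]
  ring

variable [DecidableEq ι]

def trainingMatrix (A₂ : Matrix κ ι R) : Matrix (ι × κ) ι R :=
  of fun p j ↦ if j = p.1 then A₂ p.2 j else 0

def blockColumns (v : ι → κ → R) : Matrix (ι × κ) ι R :=
  of fun p' j ↦ if p'.1 = j then v j p'.2 else 0

def blockIndicator : ι → ι × κ → R :=
  fun m p' ↦ if p'.1 = m then 1 else 0

theorem dataMatrix_blockIndicator (A₁ : Matrix κ (ι × κ) R) :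
    dataMatrix A₁ blockIndicator = jacobianMatrix A₁ (blockColumns 1) := by
  ext p p'
  simp [dataMatrix, jacobianMatrix, blockIndicator, blockColumns]

variable [Fintype ι] [Fintype κ]

theorem dataMatrix_blockIndicator_mul_blockColumns (A₁ : Matrix κ (ι × κ) R)
    (A₂ : Matrix κ ι R) (w : ι → κ → R)
    (hw : ∀ j, A₁.submatrix id (Prod.mk j) *ᵥ w j = fun q ↦ A₂ q j) :
    dataMatrix A₁ blockIndicator * blockColumns w = trainingMatrix A₂ := by
  ext ⟨m, q⟩ j
  by_cases hj : j = m
  · subst hj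
    simpa [dataMatrix, blockIndicator, blockColumns, trainingMatrix, mul_apply,
      Fintype.sum_prod_type, mulVec, dotProduct] using congrFun (hw j) q
  · simp [dataMatrix, blockIndicator, blockColumns, trainingMatrix, mul_apply,
      Fintype.sum_prod_type, hj]

variable [DecidableEq κ]

theorem jacobianMatrix_blockColumns (A₁ : Matrix κ (ι × κ) R) (v : ι → κ → R) :
    jacobianMatrix A₁ (blockColumns v) =
      (blockDiagonal fun m ↦ A₁.submatrix id (Prod.mk m) * diagonal (v m)).submatrix
        (Equiv.prodComm ι κ) (Equiv.prodComm ι κ) := by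
  ext ⟨m, q⟩ ⟨m', q'⟩
  by_cases hm : m' = m
  · subst hm; simp [jacobianMatrix, blockColumns]
  · simp [jacobianMatrix, blockColumns, blockDiagonal_apply, hm, Ne.symm hm]

theorem det_jacobianMatrix_blockColumns (A₁ : Matrix κ (ι × κ) R) (v : ι → κ → R) :
    (jacobianMatrix A₁ (blockColumns v)).det =
      ∏ m, (A₁.submatrix id (Prod.mk m)).det * ∏ q, v m q := by
  rw [jacobianMatrix_blockColumns, det_submatrix_equiv_self, det_blockDiagonal]
  simp only [det_mul, det_diagonal]

/- The adjugate instead of the inverse makes this a polynomial in `X₀`. -/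
def genericDet (A₁ : Matrix κ (ι × κ) R) (A₂ : Matrix κ ι R) (X₀ : ι → ι × κ → R) : R :=
  (dataMatrix A₁ X₀).det *
    (jacobianMatrix A₁ ((dataMatrix A₁ X₀).adjugate * trainingMatrix A₂)).det

theorem map_genericDet (f : R →+* S) (A₁ : Matrix κ (ι × κ) R) (A₂ : Matrix κ ι R)
    (X₀ : ι → ι × κ → R) :
    f (genericDet A₁ A₂ X₀) = genericDet (A₁.map f) (A₂.map f) fun m p' ↦ f (X₀ m p') := by
  have hdata : (dataMatrix A₁ X₀).map f = dataMatrix (A₁.map f) fun m p' ↦ f (X₀ m p') := by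
    ext; simp [dataMatrix]
  have htrain : (trainingMatrix A₂).map f = trainingMatrix (A₂.map f) := by
    ext; simp [trainingMatrix, apply_ite f]
  have hjac (K : Matrix (ι × κ) ι R) :
      (jacobianMatrix A₁ K).map f = jacobianMatrix (A₁.map f) (K.map f) := by
    ext; simp [jacobianMatrix]
  have hadj : (dataMatrix A₁ X₀).adjugate.map f =
      (dataMatrix (A₁.map f) fun m p' ↦ f (X₀ m p')).adjugate := by
    rw [← hdata]; exact f.map_adjugate _
  rw [genericDet, genericDet, map_mul, f.map_det, f.map_det, RingHom.mapMatrix_apply,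
    RingHom.mapMatrix_apply, hjac, Matrix.map_mul, hadj, htrain, hdata]

open MvPolynomial in
noncomputable def genericPoly (A₁ : Matrix κ (ι × κ) R) (A₂ : Matrix κ ι R) :
    MvPolynomial (ι × (ι × κ)) R :=
  genericDet (A₁.map C) (A₂.map C) fun m p' ↦ X (m, p')

theorem eval_genericPoly (A₁ : Matrix κ (ι × κ) R) (A₂ : Matrix κ ι R) (X₀ : ι → ι × κ → R) :
    MvPolynomial.eval (Function.uncurry X₀) (genericPoly A₁ A₂) = genericDet A₁ A₂ X₀ := by
  simp [genericPoly, map_genericDet, Matrix.map_map, Function.comp_def]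

section Field

variable {K : Type*} [Field K]

theorem genericDet_ne_zero_iff (A₁ : Matrix κ (ι × κ) K) (A₂ : Matrix κ ι K)
    (X₀ : ι → ι × κ → K) :
    genericDet A₁ A₂ X₀ ≠ 0 ↔ (dataMatrix A₁ X₀).det ≠ 0 ∧
      (jacobianMatrix A₁ ((dataMatrix A₁ X₀)⁻¹ * trainingMatrix A₂)).det ≠ 0 := by
  set C := dataMatrix A₁ X₀
  by_cases hC : C.det = 0
  · simp [genericDet, C, hC]
  · have hadj : C.adjugate = C.det • C⁻¹ := by
      rw [inv_def, smul_smul, Ring.inverse_eq_inv', mul_inv_cancel₀ hC, one_smul]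
    simp [genericDet, C, hadj, Matrix.smul_mul, jacobianMatrix_smul, hC]

theorem genericDet_blockIndicator_ne_zero (A₁ : Matrix κ (ι × κ) K) (A₂ : Matrix κ ι K)
    (hA : ∀ s : κ → (ι × κ) ⊕ ι, Function.Injective s →
      ((fromCols A₁ A₂).submatrix id s).det ≠ 0) :
    genericDet A₁ A₂ blockIndicator ≠ 0 := by
  set blk := fun m ↦ A₁.submatrix id (Prod.mk m)
  have hblk (m : ι) : (blk m).det ≠ 0 := by
    convert hA (Sum.inl ∘ Prod.mk m) (Sum.inl_injective.comp (Prod.mk_right_injective m))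
    ext; simp [blk]
  -- Cramer's rule: up to `det (blk j)`, the entries of `(blk j)⁻¹ a_j` are the minors obtained by
  -- replacing one column of `blk j` with the training column `a_j`.
  have hcramer (j : ι) (q : κ) : (blk j).cramer (fun q ↦ A₂ q j) q ≠ 0 := by
    have hinj : Function.Injective
        (fun q' ↦ if q' = q then Sum.inr j else Sum.inl (j, q') : κ → (ι × κ) ⊕ ι) := by
      intro a b hab
      by_cases ha : a = q <;> by_cases hb : b = q <;> simp_all
    rw [cramer_apply]
    convert hA _ hinj using 2
    ext q₁ q₂
    by_cases h₂ : q₂ = q <;> simp [blk, h₂]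
  set b := fun j ↦ (blk j)⁻¹ *ᵥ fun q ↦ A₂ q j
  have hb (j : ι) (q : κ) : b j q ≠ 0 := by
    simpa [b, inv_def, smul_mulVec, ← cramer_eq_adjugate_mulVec, hblk j] using hcramer j q
  have hmul : dataMatrix A₁ blockIndicator * blockColumns b = trainingMatrix A₂ :=
    dataMatrix_blockIndicator_mul_blockColumns A₁ A₂ b fun j ↦ by
      simp [b, blk, mulVec_mulVec, mul_nonsing_inv _ (isUnit_iff_ne_zero.mpr (hblk j))]
  have hdet : (dataMatrix A₁ blockIndicator).det ≠ 0 := by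
    simpa [dataMatrix_blockIndicator, det_jacobianMatrix_blockColumns, Finset.prod_ne_zero_iff]
      using hblk
  rw [genericDet_ne_zero_iff, ← hmul, nonsing_inv_mul_cancel_left (A := dataMatrix A₁ _) _
    (isUnit_iff_ne_zero.mpr hdet), det_jacobianMatrix_blockColumns]
  exact ⟨hdet, Finset.prod_ne_zero_iff.mpr fun m _ ↦
    mul_ne_zero (hblk m) (Finset.prod_ne_zero_iff.mpr fun q _ ↦ hb m q)⟩

end Field

variable {M Q T : ℕ}

def firstCols (h : M * Q ≤ T) (A : Matrix (Fin Q) (Fin T) ℂ) : Matrix (Fin Q) (Fin M × Fin Q) ℂ :=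
  of fun q p ↦ A q (emb M Q T h p)

def trainCols (h : M * (Q + 1) ≤ T) (A : Matrix (Fin Q) (Fin T) ℂ) : Matrix (Fin Q) (Fin M) ℂ :=
  of fun q j ↦ A q (tcol M Q T h j)

def colIndex (M Q : ℕ) : (Fin M × Fin Q) ⊕ Fin M ≃ Fin (M * (Q + 1)) :=
  (Equiv.sumCongr finProdFinEquiv (.refl _)).trans
    (finSumFinEquiv.trans (finCongr (Nat.mul_succ M Q).symm))

theorem castLE_colIndex (h₁ : M * Q ≤ T) (h : M * (Q + 1) ≤ T) (c : (Fin M × Fin Q) ⊕ Fin M) :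
    Fin.castLE h (colIndex M Q c) = Sum.elim (emb M Q T h₁) (tcol M Q T h) c := by
  rcases c with ⟨m, q⟩ | j <;> ext <;>
    simp only [colIndex, emb, tcol, Equiv.trans_apply, Equiv.sumCongr_apply, Sum.map_inl,
      Sum.map_inr, Sum.elim_inl, Sum.elim_inr, finSumFinEquiv_apply_left,
      finSumFinEquiv_apply_right, finCongr_apply, Fin.val_castLE, Fin.val_cast, Fin.val_castAdd,
      Fin.val_natAdd, finProdFinEquiv_apply_val, Equiv.refl_apply]
  ring

theorem det_fromCols_submatrix_ne_zero (h₁ : M * Q ≤ T) (h : M * (Q + 1) ≤ T)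
    (A : Matrix (Fin Q) (Fin T) ℂ)
    (hA : ∀ f : Fin Q → Fin (M * (Q + 1)), Function.Injective f →
      IsUnit (Matrix.of fun q q' : Fin Q => A q (Fin.castLE h (f q'))))
    (s : Fin Q → (Fin M × Fin Q) ⊕ Fin M) (hs : Function.Injective s) :
    ((fromCols (firstCols h₁ A) (trainCols h A)).submatrix id s).det ≠ 0 := by
  convert ((isUnit_iff_isUnit_det _).mp (hA _ ((colIndex M Q).injective.comp hs))).ne_zero
    using 2
  ext q q'
  rcases hc : s q' with p | j <;> simp [castLE_colIndex h₁, hc, firstCols, trainCols]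

theorem CR_eq_dataMatrix (h₁ : M * Q ≤ T) (A : Matrix (Fin Q) (Fin T) ℂ)
    {X : Matrix (Fin M) (Fin T) ℂ} {X₀ : Fin M → Fin M × Fin Q → ℂ}
    (hX : ∀ m p', X m (emb M Q T h₁ p') = X₀ m p') :
    CR M Q T h₁ A X = dataMatrix (firstCols h₁ A) X₀ := by
  ext p p'
  simp [CR, Rmat, dataMatrix, firstCols, hX]

theorem Rmat_apply_tcol (h : M * (Q + 1) ≤ T) (A : Matrix (Fin Q) (Fin T) ℂ)
    {X : Matrix (Fin M) (Fin T) ℂ} (hX : ∀ n m, X m (tcol M Q T h n) = if n = m then 1 else 0)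
    (p : Fin M × Fin Q) (j : Fin M) :
    Rmat M Q T A X p (tcol M Q T h j) = trainingMatrix (trainCols h A) p j := by
  simp [Rmat, trainingMatrix, trainCols, hX]

theorem Jmat_eq_jacobianMatrix (h₁ : M * Q ≤ T) (h : M * (Q + 1) ≤ T)
    (A : Matrix (Fin Q) (Fin T) ℂ) {X : Matrix (Fin M) (Fin T) ℂ}
    (hX : ∀ n m, X m (tcol M Q T h n) = if n = m then 1 else 0) :
    Jmat M Q T h A X = jacobianMatrix (firstCols h₁ A)
      ((CR M Q T h₁ A X)⁻¹ * trainingMatrix (trainCols h A)) := by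
  ext p p'
  simp [Jmat, Bmat, jacobianMatrix, firstCols, mul_apply, Rmat_apply_tcol h A hX]

end Identifiability

open Identifiability

theorem stmt14_general (M Q T : ℕ) (h : M * (Q + 1) ≤ T)
    (A : Matrix (Fin Q) (Fin T) ℂ)
    (hA : ∀ f : Fin Q → Fin (M * (Q + 1)), Function.Injective f →
      IsUnit (Matrix.of fun q q' : Fin Q => A q (Fin.castLE h (f q')))) :
    ∀ᵐ X₀ : Fin M → (Fin M × Fin Q) → ℂ ∂volume,
      ∀ X : Matrix (Fin M) (Fin T) ℂ,
        (∀ (m : Fin M) (p' : Fin M × Fin Q),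
            X m (emb M Q T (le_trans (Nat.mul_le_mul_left M (Nat.le_succ Q)) h) p') = X₀ m p') →
        (∀ n m : Fin M, X m (tcol M Q T h n) = if n = m then 1 else 0) →
        IsUnit (CR M Q T (le_trans (Nat.mul_le_mul_left M (Nat.le_succ Q)) h) A X) ∧
          (Jmat M Q T h A X).det ≠ 0 := by
  have h₁ : M * Q ≤ T := le_trans (Nat.mul_le_mul_left M (Nat.le_succ Q)) h
  have hpoly : genericPoly (firstCols h₁ A) (trainCols h A) ≠ 0 := fun h0 ↦
    genericDet_blockIndicator_ne_zero _ _ (det_fromCols_submatrix_ne_zero h₁ h A hA) <| by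
      rw [← eval_genericPoly, h0, map_zero]
  filter_upwards [MvPolynomial.ae_eval_uncurry_ne_zero hpoly] with X₀ hX₀ X hX hX'
  rw [eval_genericPoly, genericDet_ne_zero_iff] at hX₀
  rw [Jmat_eq_jacobianMatrix h₁ h A hX', CR_eq_dataMatrix h₁ A hX]
  exact ⟨(isUnit_iff_isUnit_det _).mpr (isUnit_iff_ne_zero.mpr hX₀.1), hX₀.2⟩

/-- Theorem 2 of the paper: If every choice of `Q` columns from among
the first `M(Q+1)` columns of `A` is linearly independent (every such `Q×Q` submatrix
is invertible), then for Lebesgue-almost every `X₀ ∈ ℂ^{M×MQ}`, letting `X` have first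
`MQ` columns `X₀` and satisfy the training condition, `C_R(X)` is invertible and
`det(J(X)) ≠ 0`. -/
theorem stmt14 (M Q T : ℕ) (hM : 0 < M) (hQ : 0 < Q) (hT : 0 < T) (h : M * (Q + 1) ≤ T)
    (A : Matrix (Fin Q) (Fin T) ℂ)
    (hA : ∀ f : Fin Q → Fin (M * (Q + 1)), Function.Injective f →
      IsUnit (Matrix.of fun q q' : Fin Q => A q (Fin.castLE h (f q')))) :
    ∀ᵐ X₀ : Fin M → (Fin M × Fin Q) → ℂ ∂volume,
      ∀ X : Matrix (Fin M) (Fin T) ℂ,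
        (∀ (m : Fin M) (p' : Fin M × Fin Q),
            X m (emb M Q T (le_trans (Nat.mul_le_mul_left M (Nat.le_succ Q)) h) p') = X₀ m p') →
        (∀ n m : Fin M, X m (tcol M Q T h n) = if n = m then 1 else 0) →
        IsUnit (CR M Q T (le_trans (Nat.mul_le_mul_left M (Nat.le_succ Q)) h) A X) ∧
          (Jmat M Q T h A X).det ≠ 0 :=
  stmt14_general M Q T h A hA
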